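/- Let η be a pronormal L-subgroup of μ with tip(η) = tip(μ). Then the normalizer N(η) of η in μ is a pronormal L-subgroup of μ. -/
import Mathlib


open scoped Classical

section Defs

variable {G : Type*} [Group G] {L : Type*} [CompletelyDistribLattice L]

/-- `μ` is an `L`-subgroup of the group `G`. -/
def IsLSubgroup (μ : G → L) : Prop :=
  (∀ x y : G, μ x ⊓ μ y ≤ μ (x * y)) ∧ (∀ x : G, μ x⁻¹ = μ x)

/-- The conjugate `η^{a_z}` of `η` by the `L`-point `a_z`. -/
def LConj (η : G → L) (a : L) (z : G) : G → L :=
  fun x => a ⊓ η (z * x * z⁻¹)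

/-- The `L`-subgroup generated by the `L`-subset `η`. -/
def LGen (η : G → L) : G → L :=
  fun x => ⨅ θ ∈ {θ : G → L | IsLSubgroup θ ∧ η ≤ θ}, θ x

/-- `η` is a pronormal `L`-subgroup of `μ`. -/
def IsLPronormal (μ η : G → L) : Prop :=
  IsLSubgroup η ∧ η ≤ μ ∧
    ∀ (a : L) (x : G), a ≤ μ x →
      ∃ (b : L) (y : G), b ≤ LGen (η ⊔ LConj η a x) y ∧ LConj η b y = LConj η a x

/-- `η` is a normal `L`-subgroup of `μ`. -/
def IsLNormal (μ η : G → L) : Prop :=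
  IsLSubgroup η ∧ η ≤ μ ∧ ∀ x y : G, η x ⊓ μ y ≤ η (y * x * y⁻¹)

/-- Set product of two `L`-subsets. -/
def LSetProd (η ν : G → L) : G → L :=
  fun x => ⨆ y : G, ⨆ z : G, ⨆ _ : y * z = x, η y ⊓ ν z

/-- The normalizer `N(η)` of `η` in `μ`. -/
def LNormalizer (μ η : G → L) : G → L :=
  fun z => sSup {a : L | a ≤ μ z ∧ LConj η a z ≤ η}

/-- The conjugate `μημ⁻¹` of `η` in `μ`. -/
def LConjAll (μ η : G → L) : G → L :=
  fun x => ⨆ z : G, ⨆ y : G, ⨆ _ : x = z * y * z⁻¹, η y ⊓ μ z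

/-- The normal closure `η^μ` of `η` in `μ`. -/
def LNormalClosure (μ η : G → L) : G → L := LGen (LConjAll μ η)

/-- The normal closure series `η₀ = μ`, `ηᵢ₊₁ = η^{ηᵢ}`. -/
def LNcSeries (μ η : G → L) : ℕ → (G → L)
  | 0 => μ
  | n + 1 => LNormalClosure (LNcSeries μ η n) η

/-- `η` is a subnormal `L`-subgroup of `μ`. -/
def IsLSubnormal (μ η : G → L) : Prop := ∃ m : ℕ, LNcSeries μ η m = η

/-- The commutator `(η, θ)` of two `L`-subsets. -/
noncomputable def LCommFun (η θ : G → L) : G → L :=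
  fun x =>
    if ∃ y z : G, x = y * z * y⁻¹ * z⁻¹ then
      ⨆ y : G, ⨆ z : G, ⨆ _ : x = y * z * y⁻¹ * z⁻¹, η y ⊓ θ z
    else (⨅ g : G, η g) ⊓ (⨅ g : G, θ g)

/-- The descending central chain `Z₀(μ) = μ`, `Zᵢ₊₁(μ) = [Zᵢ(μ), μ]`. -/
noncomputable def LDcc (μ : G → L) : ℕ → (G → L)
  | 0 => μ
  | n + 1 => LGen (LCommFun (LDcc μ n) μ)

/-- The trivial `L`-subgroup with the same tip and tail as `μ`. -/
noncomputable def LTrivial (μ : G → L) : G → L :=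
  fun x => if x = 1 then μ 1 else ⨅ g : G, μ g

/-- `μ` is a nilpotent `L`-group. -/
def IsLNilpotent (μ : G → L) : Prop := ∃ n : ℕ, LDcc μ n = LTrivial μ

/-- Sup-property of an `L`-subset. -/
def SupProp (μ : G → L) : Prop :=
  ∀ A : Set G, A.Nonempty → ∃ a ∈ A, μ a = ⨆ x ∈ A, μ x

end Defs

/-- Image of an `L`-subset under a map. -/
def LImage {G H L : Type*} [CompleteLattice L] (f : G → H) (μ : G → L) : H → L :=
  fun y => ⨆ x : G, ⨆ _ : f x = y, μ x

section Aux

variable {G : Type*} [Group G] {L : Type*} [CompletelyDistribLattice L]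

lemma lsg_conj_ge {η : G → L} (h : IsLSubgroup η) (z w : G) :
    η z ⊓ η w ≤ η (z * w * z⁻¹) := by
  refine le_trans (le_inf ((h.1 z w).trans' le_rfl) ?_) (h.1 (z * w) z⁻¹)
  rw [h.2]; exact inf_le_left

lemma lsg_conj_le {η : G → L} (h : IsLSubgroup η) (z g : G) :
    η z ⊓ η (z * g * z⁻¹) ≤ η g := by
  have := lsg_conj_ge h z⁻¹ (z * g * z⁻¹)
  rw [h.2 z] at this
  simpa [mul_assoc] using this

lemma lsg_tip_ge {μ : G → L} (h : IsLSubgroup μ) (x : G) : μ x ≤ μ 1 := by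
  have h1 : μ x ⊓ μ x⁻¹ ≤ μ (x * x⁻¹) := h.1 x x⁻¹
  simpa [h.2 x] using h1

lemma le_lgen {η : G → L} : η ≤ LGen η :=
  fun x => le_iInf₂ fun _ hθ => hθ.2 x

lemma lgen_le {η θ : G → L} (hθ : IsLSubgroup θ) (h : η ≤ θ) : LGen η ≤ θ :=
  fun x => iInf₂_le θ ⟨hθ, h⟩

lemma lgen_isLSubgroup (η : G → L) : IsLSubgroup (LGen η) := by
  constructor
  · intro x y
    refine le_iInf₂ fun θ hθ => le_trans ?_ (hθ.1.1 x y)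
    exact inf_le_inf (iInf₂_le θ hθ) (iInf₂_le θ hθ)
  · intro x
    refine le_antisymm (le_iInf₂ fun θ hθ => ?_) (le_iInf₂ fun θ hθ => ?_)
    · have : LGen η x⁻¹ ≤ θ x⁻¹ := iInf₂_le θ hθ
      rwa [hθ.1.2] at this
    · have : LGen η x ≤ θ x⁻¹⁻¹ := by
        rw [inv_inv]; exact iInf₂_le θ hθ
      rwa [hθ.1.2] at this

lemma lgen_self {η : G → L} (h : IsLSubgroup η) : LGen η = η :=
  le_antisymm (lgen_le h le_rfl) le_lgen

lemma lgen_mono {η ν : G → L} (h : η ≤ ν) : LGen η ≤ LGen ν :=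
  lgen_le (lgen_isLSubgroup ν) (h.trans le_lgen)

lemma lconj_le_of_le {μ η : G → L} (hμ : IsLSubgroup μ) (hle : η ≤ μ)
    {a : L} {x : G} (ha : a ≤ μ x) : LConj η a x ≤ μ := by
  intro g
  have h1 : μ x ⊓ μ (x * g * x⁻¹) ≤ μ g := lsg_conj_le hμ x g
  exact le_trans (inf_le_inf ha (hle _)) h1

/-- Key step: using pronormality of `η`, the normalizer condition is inverse-closed. -/
lemma lconj_inv_le {μ η : G → L} (hμ : IsLSubgroup μ) (hpro : IsLPronormal μ η)
    (htip : η 1 = μ 1) {a : L} {x : G} (ha : a ≤ μ x) (hc : LConj η a x ≤ η) :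
    LConj η a x⁻¹ ≤ η := by
  obtain ⟨hη, hle, hp⟩ := hpro
  obtain ⟨b, y, hb, heq⟩ := hp a x ha
  have hsup : η ⊔ LConj η a x = η := sup_eq_left.mpr hc
  rw [hsup, lgen_self hη] at hb
  have ha1 : a ≤ η 1 := htip ▸ ha.trans (lsg_tip_ge hμ x)
  have hab : a ≤ b := by
    have h1 := congrFun heq 1
    simp only [LConj, mul_one, mul_inv_cancel] at h1
    calc a = a ⊓ η 1 := (inf_eq_left.mpr ha1).symm
      _ = b ⊓ η 1 := h1.symm
      _ ≤ b := inf_le_left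
  have hkey : ∀ h : G, a ⊓ η h ≤ η (x * h * x⁻¹) := by
    intro h
    have h1 : a ⊓ η h ≤ b ⊓ η (y * h * y⁻¹) := by
      refine le_inf (inf_le_left.trans hab) ?_
      refine le_trans ?_ (lsg_conj_ge hη y h)
      exact le_inf (inf_le_left.trans (hab.trans hb)) inf_le_right
    have h2 := congrFun heq h
    simp only [LConj] at h2
    rw [h2] at h1
    exact h1.trans inf_le_right
  intro g
  have := hkey (x⁻¹ * g * x)
  simp only [LConj]
  calc a ⊓ η (x⁻¹ * g * x⁻¹⁻¹) = a ⊓ η (x⁻¹ * g * x) := by rw [inv_inv]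
    _ ≤ η (x * (x⁻¹ * g * x) * x⁻¹) := this
    _ = η g := by group

lemma le_lnormalizer {μ η : G → L} {a : L} {z : G}
    (ha : a ≤ μ z) (hc : LConj η a z ≤ η) : a ≤ LNormalizer μ η z :=
  le_sSup ⟨ha, hc⟩

lemma lnormalizer_le {μ η : G → L} : LNormalizer μ η ≤ μ :=
  fun _ => sSup_le fun _ ha => ha.1

lemma le_lnormalizer_self {μ η : G → L} (hη : IsLSubgroup η) (hle : η ≤ μ) :
    η ≤ LNormalizer μ η := by
  intro z
  refine le_lnormalizer (hle z) fun g => ?_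
  exact lsg_conj_le hη z g

lemma lnormalizer_isLSubgroup {μ η : G → L} (hμ : IsLSubgroup μ)
    (hpro : IsLPronormal μ η) (htip : η 1 = μ 1) :
    IsLSubgroup (LNormalizer μ η) := by
  constructor
  · intro x y
    show sSup _ ⊓ sSup _ ≤ sSup _
    rw [sSup_inf_eq]
    refine iSup₂_le fun a ha => ?_
    rw [inf_sSup_eq]
    refine iSup₂_le fun b hb => ?_
    refine le_sSup ⟨le_trans (inf_le_inf ha.1 hb.1) (hμ.1 x y), fun g => ?_⟩
    simp only [LConj]
    have hgr : x * y * g * (x * y)⁻¹ = x * (y * g * y⁻¹) * x⁻¹ := by group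
    rw [hgr]
    calc a ⊓ b ⊓ η (x * (y * g * y⁻¹) * x⁻¹)
        ≤ b ⊓ (a ⊓ η (x * (y * g * y⁻¹) * x⁻¹)) :=
          le_of_eq (by rw [inf_assoc, inf_left_comm])
      _ ≤ b ⊓ η (y * g * y⁻¹) := inf_le_inf_left _ (ha.2 _)
      _ ≤ η g := hb.2 g
  · intro x
    show sSup _ = sSup _
    congr 1
    ext a
    constructor
    · rintro ⟨h1, h2⟩
      rw [hμ.2] at h1
      refine ⟨h1, ?_⟩
      have := lconj_inv_le hμ hpro htip (by rwa [hμ.2]) h2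
      rwa [inv_inv] at this
    · rintro ⟨h1, h2⟩
      exact ⟨by rwa [hμ.2], lconj_inv_le hμ hpro htip h1 h2⟩

end Aux

theorem stmt10 {G : Type*} [Group G] {L : Type*} [CompletelyDistribLattice L]
    (μ η : G → L) (hμ : IsLSubgroup μ) (hpro : IsLPronormal μ η)
    (htip : η 1 = μ 1) :
    IsLPronormal μ (LNormalizer μ η) := by
  obtain ⟨hη, hle, hp⟩ := hpro
  have hpro : IsLPronormal μ η := ⟨hη, hle, hp⟩
  refine ⟨lnormalizer_isLSubgroup hμ hpro htip, lnormalizer_le, ?_⟩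
  intro a x ha
  refine ⟨a, x, ?_, rfl⟩
  -- abnormality: a ≤ LGen (N ⊔ N^{a_x}) x
  obtain ⟨b, y, hb, heq⟩ := hp a x ha
  set N := LNormalizer μ η with hN
  set θ := LGen (N ⊔ LConj N a x) with hθ
  have hθsg : IsLSubgroup θ := lgen_isLSubgroup _
  have hNθ : N ≤ θ := le_sup_left.trans le_lgen
  -- b ≤ μ y
  have hmuy : b ≤ μ y := by
    refine hb.trans (lgen_le hμ (sup_le hle ?_) y)
    exact lconj_le_of_le hμ hle ha
  -- a ≤ b
  have ha1 : a ≤ η 1 := htip ▸ ha.trans (lsg_tip_ge hμ x)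
  have hab : a ≤ b := by
    have h1 := congrFun heq 1
    simp only [LConj, mul_one, mul_inv_cancel] at h1
    calc a = a ⊓ η 1 := (inf_eq_left.mpr ha1).symm
      _ = b ⊓ η 1 := h1.symm
      _ ≤ b := inf_le_left
  -- a ≤ N (x * y⁻¹)
  have haN : a ≤ N (x * y⁻¹) := by
    refine le_lnormalizer ?_ fun g => ?_
    · have : a ≤ μ x ⊓ μ y⁻¹ := le_inf ha (by rw [hμ.2]; exact hab.trans hmuy)
      exact this.trans (hμ.1 x y⁻¹)
    · simp only [LConj]
      have hgr : x * y⁻¹ * g * (x * y⁻¹)⁻¹ = x * (y⁻¹ * g * y) * x⁻¹ := by group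
      rw [hgr]
      have h2 := congrFun heq (y⁻¹ * g * y)
      simp only [LConj] at h2
      have h3 : y * (y⁻¹ * g * y) * y⁻¹ = g := by group
      rw [h3] at h2
      calc a ⊓ η (x * (y⁻¹ * g * y) * x⁻¹)
          ≤ a ⊓ (a ⊓ η (x * (y⁻¹ * g * y) * x⁻¹)) := le_inf inf_le_left le_rfl
        _ = a ⊓ (b ⊓ η g) := by rw [h2]
        _ ≤ η g := inf_le_right.trans inf_le_right
  -- b ≤ θ y
  have hbθ : b ≤ θ y := by
    refine hb.trans (lgen_mono (sup_le ?_ ?_) y)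
    · exact (le_lnormalizer_self hη hle).trans le_sup_left
    · intro g
      exact le_trans (inf_le_inf_left a ((le_lnormalizer_self hη hle) _)) le_sup_right
  -- conclude
  have : a ≤ θ (x * y⁻¹) ⊓ θ y := le_inf (haN.trans (hNθ _)) (hab.trans hbθ)
  have h4 := this.trans (hθsg.1 (x * y⁻¹) y)
  simpa using h4
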